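/- arXiv:2005.11149 — 6 statements merged into one kernel-verified Lean document; each statement's English description precedes it below -/
import Mathlib

section
/- Let N_A, N_B ≥ 1, let ρ be a positive semidefinite Hermitian complex matrix with trace 1 indexed by Fin N_A × Fin N_B, and let Ψ_ref ∈ ℂ^{N_A} be a unit vector. Then the set of real numbers { Re⟨Ψ_ref, Tr_B(U ρ U†) Ψ_ref⟩ : U a unitary matrix indexed by Fin N_A × Fin N_B } has a greatest element equal to λ_1 + λ_2 + … + λ_{N_B}, the sum of the N_B largest eigenvalues of ρ counted with multiplicity. -/
/-! With `P = |Ψ⟩⟨Ψ| ⊗ 1`, the quantity maximised is `Re Tr (U ρ U† P) = Re Tr (ρ Q)` for the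
orthogonal projection `Q = U† P U` of rank `N_B`. In an eigenbasis of `ρ`,
`Tr (ρ Q) = ∑ⱼ λⱼ Qⱼⱼ` with weights `Qⱼⱼ ∈ [0, 1]` summing to `N_B`, and such a fractional choice
of `N_B` of the `λⱼ` is at most the sum of the `N_B` largest (Ky Fan). Equality holds when `Q`
projects onto the corresponding eigenvectors, which is reached by a unitary sending the vectors
`Ψ ⊗ e_b` spanning the range of `P` to them. -/

open Matrix
open scoped ComplexOrder

noncomputable def traceB {NA NB : ℕ} (M : Matrix (Fin NA × Fin NB) (Fin NA × Fin NB) ℂ) :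
    Matrix (Fin NA) (Fin NA) ℂ :=
  fun a a' => ∑ b : Fin NB, M (a, b) (a', b)

open scoped Kronecker

theorem Antitone.sum_mul_le_sum_filter_lt {N k : ℕ} {μ : Fin N → ℝ} (hμ : Antitone μ)
    {s : Fin N → ℝ} (hs₀ : ∀ i, 0 ≤ s i) (hs₁ : ∀ i, s i ≤ 1) (hs : ∑ i, s i = k) :
    ∑ i, μ i * s i ≤ ∑ i ∈ Finset.univ.filter (fun i : Fin N => (i : ℕ) < k), μ i := by
  rcases N.eq_zero_or_pos with rfl | hN
  · simp
  have hkN : k ≤ N := by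
    have : (k : ℝ) ≤ N := hs ▸ (Finset.sum_le_sum fun i _ => hs₁ i).trans (by simp)
    exact_mod_cast this
  set χ : Fin N → ℝ := fun i => if (i : ℕ) < k then 1 else 0
  have hχ : ∑ i, χ i = k := by
    rw [Finset.sum_ite, Finset.sum_const_zero, add_zero, Finset.sum_const, nsmul_one,
      Fin.card_filter_val_lt, min_eq_right hkN]
  -- `θ` separates the first `k` values of `μ` from the others (also when `k = 0`).
  set θ := μ ⟨k - 1, by omega⟩
  have hsep : ∀ i, 0 ≤ (μ i - θ) * (χ i - s i) := by
    intro i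
    by_cases hi : (i : ℕ) < k
    · have : θ ≤ μ i := hμ (Fin.le_def.mpr (by simp only; omega))
      have := hs₁ i
      simp only [χ, hi, if_true]
      nlinarith
    · have : μ i ≤ θ := hμ (Fin.le_def.mpr (by simp only; omega))
      have := hs₀ i
      simp only [χ, hi, if_false]
      nlinarith
  have hexpand : ∑ i, (μ i - θ) * (χ i - s i) =
      ∑ i, μ i * χ i - ∑ i, μ i * s i - θ * (∑ i, χ i - ∑ i, s i) := by
    simp only [Finset.mul_sum, ← Finset.sum_sub_distrib]
    exact Finset.sum_congr rfl fun i _ => by ring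
  have hfilter : ∑ i ∈ Finset.univ.filter (fun i : Fin N => (i : ℕ) < k), μ i =
      ∑ i, μ i * χ i := by
    simp only [Finset.sum_filter, χ, mul_ite, mul_one, mul_zero]
  rw [hχ, hs, sub_self, mul_zero, sub_zero] at hexpand
  linarith [Finset.sum_nonneg fun i (_ : i ∈ Finset.univ) => hsep i]

namespace Matrix

variable {𝕜 ι : Type*} [RCLike 𝕜] [Fintype ι]

theorem _root_.IsStarProjection.posSemidef {R : Matrix ι ι 𝕜} (hR : IsStarProjection R) :
    R.PosSemidef := by
  have hR' : R = Rᴴ * R := by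
    rw [← star_eq_conjTranspose, hR.isSelfAdjoint.star_eq, hR.isIdempotentElem.eq]
  rw [hR']
  exact posSemidef_conjTranspose_mul_self R

theorem isStarProjection_vecMulVec_star {Ψ : ι → 𝕜} (hΨ : star Ψ ⬝ᵥ Ψ = 1) :
    IsStarProjection (vecMulVec Ψ (star Ψ)) where
  isIdempotentElem := by
    rw [IsIdempotentElem, vecMulVec_mul_vecMulVec, hΨ, one_smul]
  isSelfAdjoint := by
    rw [IsSelfAdjoint, star_eq_conjTranspose, conjTranspose_vecMulVec, star_star]

variable [DecidableEq ι]

theorem _root_.IsStarProjection.apply_self_mem_Icc {R : Matrix ι ι 𝕜}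
    (hR : IsStarProjection R) (i : ι) : R i i ∈ Set.Icc 0 1 := by
  have h := hR.one_sub.posSemidef.diag_nonneg (i := i)
  rw [Matrix.sub_apply, one_apply_eq, sub_nonneg] at h
  exact ⟨hR.posSemidef.diag_nonneg, h⟩

theorem _root_.IsStarProjection.conjTranspose_mul_mul {P W : Matrix ι ι 𝕜}
    (hP : IsStarProjection P) (hW : W ∈ unitaryGroup ι 𝕜) :
    IsStarProjection (Wᴴ * P * W) := by
  simpa [star_eq_conjTranspose] using hP.map (Unitary.conjStarAlgAut 𝕜 _ (star ⟨W, hW⟩))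

theorem trace_conjTranspose_mul_mul (P : Matrix ι ι 𝕜) {W : Matrix ι ι 𝕜}
    (hW : W ∈ unitaryGroup ι 𝕜) : (Wᴴ * P * W).trace = P.trace := by
  rw [Matrix.mul_assoc, trace_mul_comm, Matrix.mul_assoc, ← star_eq_conjTranspose,
    Unitary.mul_star_self_of_mem hW, Matrix.mul_one]

/-- Ky Fan's maximum principle, written in an eigenbasis. -/
theorem _root_.IsStarProjection.re_trace_diagonal_mul_le {N k : ℕ} {d : ι → ℝ}
    {e : Fin N ≃ ι} (hd : Antitone (d ∘ e)) {R : Matrix ι ι 𝕜} (hR : IsStarProjection R)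
    (htr : R.trace = k) :
    RCLike.re (diagonal (RCLike.ofReal ∘ d) * R).trace ≤
      ∑ i ∈ Finset.univ.filter (fun i : Fin N => (i : ℕ) < k), d (e i) := by
  have hsum : ∑ i, RCLike.re (R (e i) (e i)) = k := by
    have h := congrArg RCLike.re htr
    rw [trace, map_sum] at h
    rw [Equiv.sum_comp e fun j => RCLike.re (R j j)]
    simpa using h
  calc RCLike.re (diagonal (RCLike.ofReal ∘ d) * R).trace
      = ∑ i, d (e i) * RCLike.re (R (e i) (e i)) := by
        rw [trace, map_sum, ← Equiv.sum_comp e]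
        simp [diagonal_mul]
    _ ≤ _ := hd.sum_mul_le_sum_filter_lt
        (fun i => by simpa using RCLike.re_le_re (hR.apply_self_mem_Icc (e i)).1)
        (fun i => by simpa using RCLike.re_le_re (hR.apply_self_mem_Icc (e i)).2) hsum

theorem re_trace_diagonal_mul_diagonal_ite_lt {N k : ℕ} (d : ι → ℝ) (e : Fin N ≃ ι) :
    RCLike.re (diagonal (RCLike.ofReal ∘ d) *
      diagonal fun j => if (e.symm j : ℕ) < k then (1 : 𝕜) else 0).trace =
      ∑ i ∈ Finset.univ.filter (fun i : Fin N => (i : ℕ) < k), d (e i) := by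
  rw [diagonal_mul_diagonal, trace_diagonal, map_sum, ← Equiv.sum_comp e, Finset.sum_filter]
  refine Finset.sum_congr rfl fun i _ => ?_
  rw [Function.comp_apply, Equiv.symm_apply_apply]
  split_ifs <;> simp

theorem IsHermitian.trace_mul_conjTranspose_mul_eq {ρ : Matrix ι ι 𝕜} (hρ : ρ.IsHermitian)
    (U P : Matrix ι ι 𝕜) :
    (U * ρ * Uᴴ * P).trace = (diagonal (RCLike.ofReal ∘ hρ.eigenvalues) *
      ((U * (hρ.eigenvectorUnitary : Matrix ι ι 𝕜))ᴴ * P *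
        (U * (hρ.eigenvectorUnitary : Matrix ι ι 𝕜)))).trace := by
  conv_lhs => rw [hρ.spectral_theorem]
  rw [Unitary.conjStarAlgAut_apply, conjTranspose_mul, star_eq_conjTranspose]
  set V : Matrix ι ι 𝕜 := ↑hρ.eigenvectorUnitary
  set D : Matrix ι ι 𝕜 := diagonal (RCLike.ofReal ∘ hρ.eigenvalues)
  rw [show U * (V * D * Vᴴ) * Uᴴ * P = (U * V) * (D * (Vᴴ * Uᴴ * P)) by
    simp only [Matrix.mul_assoc], trace_mul_comm]
  simp only [Matrix.mul_assoc]

theorem submatrix_id_mul_diagonal_mul_conjTranspose {κ : Type*} [Fintype κ] [DecidableEq κ]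
    (X : Matrix ι ι 𝕜) (d : ι → 𝕜) (σ : κ ≃ ι) :
    X.submatrix id σ * diagonal (d ∘ σ) * (X.submatrix id σ)ᴴ = X * diagonal d * Xᴴ := by
  ext i j
  rw [mul_apply, mul_apply]
  simp only [mul_diagonal, submatrix_apply, conjTranspose_apply, id, Function.comp_apply]
  exact Equiv.sum_comp σ fun k => X i k * d k * star (X j k)

theorem submatrix_id_mem_unitaryGroup {B : Matrix ι ι 𝕜} (hB : B ∈ unitaryGroup ι 𝕜)
    (σ : ι ≃ ι) : B.submatrix id σ ∈ unitaryGroup ι 𝕜 := by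
  have h := submatrix_id_mul_diagonal_mul_conjTranspose B 1 σ
  rw [Pi.one_comp, Pi.one_def, diagonal_one, Matrix.mul_one, Matrix.mul_one,
    ← star_eq_conjTranspose, ← star_eq_conjTranspose, mem_unitaryGroup_iff.mp hB] at h
  exact mem_unitaryGroup_iff.mpr h

theorem exists_mem_unitaryGroup_col_eq (a₀ : ι) {Ψ : ι → 𝕜} (hΨ : star Ψ ⬝ᵥ Ψ = 1) :
    ∃ A ∈ unitaryGroup ι 𝕜, A.col a₀ = Ψ := by
  have hnorm : ‖WithLp.toLp 2 Ψ‖ = 1 := by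
    have h := norm_sq_eq_re_inner (𝕜 := 𝕜) (WithLp.toLp 2 Ψ)
    rw [EuclideanSpace.inner_eq_star_dotProduct, dotProduct_comm, hΨ, RCLike.one_re,
      pow_eq_one_iff_of_nonneg (norm_nonneg _) two_ne_zero] at h
    exact h
  have hv : Orthonormal 𝕜 (({a₀} : Set ι).domRestrict fun _ => WithLp.toLp 2 Ψ) :=
    orthonormal_subsingleton_iff.mpr fun _ => hnorm
  obtain ⟨b, hb⟩ := hv.exists_orthonormalBasis_extension_of_card_eq (by simp)
  refine ⟨_, (EuclideanSpace.basisFun ι 𝕜).toMatrix_orthonormalBasis_mem_unitary b, ?_⟩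
  ext a
  simp [col, Module.Basis.toMatrix_apply, hb a₀ rfl]

theorem vecMulVec_col_star_col (A : Matrix ι ι 𝕜) (a₀ : ι) :
    vecMulVec (A.col a₀) (star (A.col a₀)) = A * diagonal (Pi.single a₀ 1) * Aᴴ := by
  ext i j
  simp [mul_apply, vecMulVec_apply, col, Pi.single_apply, diagonal_apply]

theorem _root_.IsStarProjection.kronecker_one {m n : Type*} [Fintype m] [Fintype n]
    [DecidableEq n] {P : Matrix m m 𝕜} (hP : IsStarProjection P) :
    IsStarProjection (P ⊗ₖ (1 : Matrix n n 𝕜)) where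
  isIdempotentElem := by
    rw [IsIdempotentElem, ← mul_kronecker_mul, hP.isIdempotentElem.eq, Matrix.mul_one]
  isSelfAdjoint := by
    rw [IsSelfAdjoint, star_eq_conjTranspose, conjTranspose_kronecker, conjTranspose_one,
      ← star_eq_conjTranspose, hP.isSelfAdjoint.star_eq]

theorem trace_vecMulVec_star_kronecker_one {m n : Type*} [Fintype m] [Fintype n]
    [DecidableEq n] {Ψ : m → 𝕜} (hΨ : star Ψ ⬝ᵥ Ψ = 1) :
    (vecMulVec Ψ (star Ψ) ⊗ₖ (1 : Matrix n n 𝕜)).trace = Fintype.card n := by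
  rw [trace_kronecker, trace_vecMulVec, dotProduct_comm, hΨ, trace_one, one_mul]

theorem exists_mem_unitaryGroup_vecMulVec_star_kronecker_one_eq {m n : Type*} [Fintype m]
    [DecidableEq m] [Fintype n] [DecidableEq n] (a₀ : m) {Ψ : m → 𝕜} (hΨ : star Ψ ⬝ᵥ Ψ = 1) :
    ∃ B ∈ unitaryGroup (m × n) 𝕜, vecMulVec Ψ (star Ψ) ⊗ₖ (1 : Matrix n n 𝕜) =
      B * diagonal (fun x : m × n => (Pi.single a₀ 1 : m → 𝕜) x.1) * Bᴴ := by
  obtain ⟨A, hA, rfl⟩ := exists_mem_unitaryGroup_col_eq a₀ hΨ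
  refine ⟨A ⊗ₖ 1, ?_, ?_⟩
  · rw [mem_unitaryGroup_iff, star_eq_conjTranspose, conjTranspose_kronecker, conjTranspose_one,
      ← mul_kronecker_mul, ← star_eq_conjTranspose, mem_unitaryGroup_iff.mp hA, Matrix.mul_one,
      one_kronecker_one]
  · have hdiag : diagonal (fun x : m × n => (Pi.single a₀ 1 : m → 𝕜) x.1) =
        diagonal (Pi.single a₀ 1) ⊗ₖ (1 : Matrix n n 𝕜) := by
      rw [← diagonal_one, diagonal_kronecker_diagonal]
      simp only [mul_one]
    rw [vecMulVec_col_star_col, hdiag, conjTranspose_kronecker, conjTranspose_one,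
      ← mul_kronecker_mul, ← mul_kronecker_mul, Matrix.mul_one, Matrix.mul_one]

end Matrix

theorem finProdFinEquiv_symm_fst_eq_zero_iff {m n : ℕ} (hm : 1 ≤ m) (i : Fin (m * n)) :
    (finProdFinEquiv.symm i).1 = ⟨0, hm⟩ ↔ (i : ℕ) < n := by
  have hi := i.2
  rw [Fin.ext_iff, finProdFinEquiv_symm_apply, Fin.coe_divNat, Nat.div_eq_zero_iff]
  constructor
  · rintro (h | h)
    · simp [h] at hi
    · exact h
  · exact Or.inr

theorem dotProduct_traceB_mulVec {NA NB : ℕ} (Ψ : Fin NA → ℂ)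
    (M : Matrix (Fin NA × Fin NB) (Fin NA × Fin NB) ℂ) :
    star Ψ ⬝ᵥ traceB M *ᵥ Ψ =
      (M * (vecMulVec Ψ (star Ψ) ⊗ₖ (1 : Matrix (Fin NB) (Fin NB) ℂ))).trace := by
  simp only [dotProduct, mulVec, traceB, trace, diag, mul_apply, kroneckerMap_apply,
    vecMulVec_apply, Fintype.sum_prod_type, one_apply, mul_ite, mul_one, mul_zero,
    Finset.sum_ite_eq', Finset.mem_univ, if_true, Finset.sum_mul, Finset.mul_sum, Pi.star_apply]
  refine Finset.sum_congr rfl fun a _ => Finset.sum_comm.trans ?_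
  exact Finset.sum_congr rfl fun b _ => Finset.sum_congr rfl fun a' _ => by ring

theorem exists_mem_unitaryGroup_conj_vecMulVec_star_kronecker_one_eq_diagonal {NA NB : ℕ}
    (hNA : 1 ≤ NA) {Ψ : Fin NA → ℂ} (hΨ : star Ψ ⬝ᵥ Ψ = 1)
    (e : Fin (NA * NB) ≃ Fin NA × Fin NB) :
    ∃ W ∈ unitaryGroup (Fin NA × Fin NB) ℂ,
      Wᴴ * (vecMulVec Ψ (star Ψ) ⊗ₖ (1 : Matrix (Fin NB) (Fin NB) ℂ)) * W =
        diagonal fun j => if (e.symm j : ℕ) < NB then 1 else 0 := by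
  obtain ⟨B, hB, hPB⟩ := exists_mem_unitaryGroup_vecMulVec_star_kronecker_one_eq (n := Fin NB)
    ⟨0, hNA⟩ hΨ
  -- `finProdFinEquiv` is lexicographic, so the indices below `NB` are those of the pairs `(0, b)`.
  set σ := e.symm.trans finProdFinEquiv.symm
  have hW := submatrix_id_mem_unitaryGroup hB σ
  refine ⟨B.submatrix id σ, hW, ?_⟩
  rw [hPB, ← submatrix_id_mul_diagonal_mul_conjTranspose B _ σ]
  set W := B.submatrix id σ
  have hWW : Wᴴ * W = 1 := mem_unitaryGroup_iff'.mp hW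
  simp only [← Matrix.mul_assoc, hWW, Matrix.one_mul]
  rw [Matrix.mul_assoc, hWW, Matrix.mul_one]
  congr 1
  ext j
  simp only [Function.comp_apply, σ, Equiv.trans_apply, Pi.single_apply,
    finProdFinEquiv_symm_fst_eq_zero_iff hNA]

theorem max_compression_rate_eq_sum_largest_eigenvalues_general
    (NA NB : ℕ) (hNA : 1 ≤ NA)
    (ρ : Matrix (Fin NA × Fin NB) (Fin NA × Fin NB) ℂ) (hρ : ρ.PosSemidef)
    (Ψref : Fin NA → ℂ) (href : star Ψref ⬝ᵥ Ψref = 1)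
    (μ : Fin (NA * NB) → ℝ)
    (hμ : ∃ e : Fin (NA * NB) ≃ (Fin NA × Fin NB), μ = hρ.1.eigenvalues ∘ e)
    (hmono : Antitone μ) :
    IsGreatest
      { x : ℝ | ∃ U : Matrix (Fin NA × Fin NB) (Fin NA × Fin NB) ℂ,
          U * Uᴴ = 1 ∧ Uᴴ * U = 1 ∧
          x = (star Ψref ⬝ᵥ (traceB (U * ρ * Uᴴ)) *ᵥ Ψref).re }
      (∑ i ∈ Finset.univ.filter (fun i : Fin (NA * NB) => (i : ℕ) < NB), μ i) := by
  obtain ⟨e, rfl⟩ := hμ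
  set V : Matrix (Fin NA × Fin NB) (Fin NA × Fin NB) ℂ := ↑hρ.1.eigenvectorUnitary
  have hV : V ∈ unitaryGroup _ ℂ := hρ.1.eigenvectorUnitary.2
  set P := vecMulVec Ψref (star Ψref) ⊗ₖ (1 : Matrix (Fin NB) (Fin NB) ℂ)
  have hvalue : ∀ U, (star Ψref ⬝ᵥ traceB (U * ρ * Uᴴ) *ᵥ Ψref).re =
      (diagonal (RCLike.ofReal ∘ hρ.1.eigenvalues) * ((U * V)ᴴ * P * (U * V))).trace.re :=
    fun U => by rw [dotProduct_traceB_mulVec, hρ.1.trace_mul_conjTranspose_mul_eq]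
  constructor
  · obtain ⟨W, hW, hWPW⟩ :=
      exists_mem_unitaryGroup_conj_vecMulVec_star_kronecker_one_eq_diagonal hNA href e
    have hU : W * Vᴴ ∈ unitaryGroup _ ℂ := Submonoid.mul_mem _ hW (Unitary.star_mem hV)
    have hVV : Vᴴ * V = 1 := mem_unitaryGroup_iff'.mp hV
    have hWV : W * Vᴴ * V = W := by rw [Matrix.mul_assoc, hVV, Matrix.mul_one]
    refine ⟨W * Vᴴ, mem_unitaryGroup_iff.mp hU, mem_unitaryGroup_iff'.mp hU, ?_⟩
    rw [hvalue, hWV, hWPW]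
    exact (re_trace_diagonal_mul_diagonal_ite_lt (𝕜 := ℂ) _ e).symm
  · rintro x ⟨U, hU, -, rfl⟩
    have hUV : U * V ∈ unitaryGroup _ ℂ := Submonoid.mul_mem _ (mem_unitaryGroup_iff.mpr hU) hV
    rw [hvalue]
    refine ((isStarProjection_vecMulVec_star href).kronecker_one.conjTranspose_mul_mul hUV)
      |>.re_trace_diagonal_mul_le hmono ?_
    rw [trace_conjTranspose_mul_mul _ hUV, trace_vecMulVec_star_kronecker_one href,
      Fintype.card_fin]

/-- For a positive semidefinite `ρ` with trace 1 on the bipartite space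
`ℂ^{N_A} ⊗ ℂ^{N_B}` and a unit vector `Ψ_ref ∈ ℂ^{N_A}`, the set of reals
`Re⟨Ψ_ref, Tr_B (U ρ U†) Ψ_ref⟩`, as `U` ranges over unitaries, has a greatest element equal
to the sum of the `N_B` largest eigenvalues of `ρ` (here `μ` is any antitone enumeration of
the eigenvalues of `ρ` with multiplicity). -/
theorem max_compression_rate_eq_sum_largest_eigenvalues
    (NA NB : ℕ) (hNA : 1 ≤ NA) (hNB : 1 ≤ NB)
    (ρ : Matrix (Fin NA × Fin NB) (Fin NA × Fin NB) ℂ) (hρ : ρ.PosSemidef)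
    (htr : ρ.trace = 1)
    (Ψref : Fin NA → ℂ) (href : star Ψref ⬝ᵥ Ψref = 1)
    (μ : Fin (NA * NB) → ℝ)
    (hμ : ∃ e : Fin (NA * NB) ≃ (Fin NA × Fin NB), μ = hρ.1.eigenvalues ∘ e)
    (hmono : Antitone μ) :
    IsGreatest
      { x : ℝ | ∃ U : Matrix (Fin NA × Fin NB) (Fin NA × Fin NB) ℂ,
          U * Uᴴ = 1 ∧ Uᴴ * U = 1 ∧
          x = (star Ψref ⬝ᵥ (traceB (U * ρ * Uᴴ)) *ᵥ Ψref).re }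
      (∑ i ∈ Finset.univ.filter (fun i : Fin (NA * NB) => (i : ℕ) < NB), μ i) :=
  max_compression_rate_eq_sum_largest_eigenvalues_general NA NB hNA ρ hρ Ψref href μ hμ hmono
end

section
/- Let U be a unitary matrix indexed by Fin N_A × Fin N_B, let Ψ_ref ∈ ℂ^{N_A} be a unit vector, and let ψ_1, …, ψ_Q ∈ ℂ^{Fin N_A × Fin N_B} be unit vectors such that for each i there exists a vector φ_i ∈ ℂ^{N_B} with U ψ_i = Ψ_ref ⊗ φ_i (a perfect quantum autoencoder for the input states ψ_1, …, ψ_Q). Then the dimension of the complex linear span of {ψ_1, …, ψ_Q} in ℂ^{Fin N_A × Fin N_B} is at most N_B, the dimension of the latent space. -/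
open Matrix

/-- The tensor (Kronecker) product of vectors: `(x ⊗ y)(a,b) = x a * y b`. -/
def tensorVec {NA NB : ℕ} (x : Fin NA → ℂ) (y : Fin NB → ℂ) :
    Fin NA × Fin NB → ℂ :=
  fun p => x p.1 * y p.2

/-- If a unitary `U` perfectly compresses each of the unit vectors
`ψ_1, …, ψ_Q` (i.e. `U ψ_i = Ψ_ref ⊗ φ_i` for some `φ_i`), then the dimension of the complex
linear span of `{ψ_1, …, ψ_Q}` is at most `N_B`, the dimension of the latent space. -/
theorem perfect_autoencoder_span_le_latent_dim
    (NA NB Q : ℕ)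
    (U : Matrix (Fin NA × Fin NB) (Fin NA × Fin NB) ℂ)
    (hU1 : U * Uᴴ = 1) (hU2 : Uᴴ * U = 1)
    (Ψref : Fin NA → ℂ) (href : star Ψref ⬝ᵥ Ψref = 1)
    (ψ : Fin Q → (Fin NA × Fin NB → ℂ))
    (hψ : ∀ i, star (ψ i) ⬝ᵥ ψ i = 1)
    (hcomp : ∀ i, ∃ φ : Fin NB → ℂ, U *ᵥ ψ i = tensorVec Ψref φ) :
    Module.finrank ℂ (Submodule.span ℂ (Set.range ψ)) ≤ NB := by
  set L : (Fin NB → ℂ) →ₗ[ℂ] (Fin NA × Fin NB → ℂ) :=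
    { toFun := fun φ => Uᴴ *ᵥ tensorVec Ψref φ
      map_add' := by
        intro x y
        have h : tensorVec Ψref (x + y) = tensorVec Ψref x + tensorVec Ψref y := by
          funext p; simp [tensorVec, mul_add]
        rw [h, Matrix.mulVec_add]
      map_smul' := by
        intro c x
        have h : tensorVec Ψref (c • x) = c • tensorVec Ψref x := by
          funext p; simp [tensorVec, mul_comm, mul_left_comm]
        rw [h, Matrix.mulVec_smul]; rfl } with hL
  have hrange : Submodule.span ℂ (Set.range ψ) ≤ LinearMap.range L := by
    rw [Submodule.span_le]
    rintro _ ⟨i, rfl⟩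
    obtain ⟨φ, hφ⟩ := hcomp i
    refine ⟨φ, ?_⟩
    simp only [hL, LinearMap.coe_mk, AddHom.coe_mk, ← hφ, Matrix.mulVec_mulVec, hU2,
      Matrix.one_mulVec]
  calc Module.finrank ℂ (Submodule.span ℂ (Set.range ψ))
      ≤ Module.finrank ℂ (LinearMap.range L) := Submodule.finrank_mono hrange
    _ ≤ Module.finrank ℂ (Fin NB → ℂ) := LinearMap.finrank_range_le L
    _ = NB := by simp
end

section
/- Let N_A, N_B ≥ 1, let Ψ_ref ∈ ℂ^{N_A} be a unit vector, and let ψ_1, …, ψ_Q ∈ ℂ^{Fin N_A × Fin N_B} be unit vectors such that the dimension of the complex linear span of {ψ_1, …, ψ_Q} is at most N_B. Then there exist a unitary matrix U indexed by Fin N_A × Fin N_B and unit vectors φ_1, …, φ_Q ∈ ℂ^{N_B} such that U ψ_i = Ψ_ref ⊗ φ_i for every i; that is, a perfect quantum autoencoder can be achieved. -/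
/-! The span `V` of the `ψ i` has dimension at most `N_B`, so it embeds isometrically into
`ℂ^{N_B}`; since `Ψref` is a unit vector, `φ ↦ Ψref ⊗ φ` is an isometry of `ℂ^{N_B}` into
`ℂ^{N_A} ⊗ ℂ^{N_B}`. The composite isometry `V → ℂ^{N_A} ⊗ ℂ^{N_B}` extends to a linear isometry
of the whole (finite-dimensional) space, i.e. a unitary `U`, and `φ i` is the image of `ψ i` in
`ℂ^{N_B}`. -/

open Matrix

open WithLp Module

section

variable {𝕜 : Type*} [RCLike 𝕜]

lemma star_dotProduct_self_eq_inner {ι : Type*} [Fintype ι] (x : ι → 𝕜) :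
    star x ⬝ᵥ x = inner 𝕜 (toLp 2 x) (toLp 2 x) := by
  rw [EuclideanSpace.inner_toLp_toLp, dotProduct_comm]

lemma finrank_span_range_toLp {ι κ : Type*} (p : ENNReal) (v : ι → κ → 𝕜) :
    finrank 𝕜 (Submodule.span 𝕜 (Set.range fun i => toLp p (v i))) =
      finrank 𝕜 (Submodule.span 𝕜 (Set.range v)) := by
  rw [← LinearEquiv.finrank_map_eq (WithLp.linearEquiv p 𝕜 (κ → 𝕜)), Submodule.map_span,
    ← Set.range_comp]
  rfl

theorem Orthonormal.nonempty_linearIsometry_of_finrank_le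
    {E F ι : Type*} [NormedAddCommGroup E] [InnerProductSpace 𝕜 E] [FiniteDimensional 𝕜 E]
    [NormedAddCommGroup F] [InnerProductSpace 𝕜 F] [Fintype ι]
    {v : ι → F} (hv : Orthonormal 𝕜 v) (h : finrank 𝕜 E ≤ Fintype.card ι) :
    Nonempty (E →ₗᵢ[𝕜] F) := by
  obtain ⟨f⟩ := Function.Embedding.nonempty_of_card_le (α := Fin (finrank 𝕜 E)) (β := ι)
    (by rwa [Fintype.card_fin])
  let b := stdOrthonormalBasis 𝕜 E
  have hb : Orthonormal 𝕜 b.toBasis := b.coe_toBasis ▸ b.orthonormal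
  have hvf : Orthonormal 𝕜 (b.toBasis.constr 𝕜 (v ∘ f) ∘ b.toBasis) := by
    convert hv.comp f f.injective
    exact funext (b.toBasis.constr_basis 𝕜 _)
  exact ⟨(b.toBasis.constr 𝕜 (v ∘ f)).isometryOfOrthonormal hb hvf⟩

theorem exists_mem_unitaryGroup_mulVec_eq {n : Type*} [Fintype n] [DecidableEq n]
    (e : EuclideanSpace 𝕜 n ≃ₗᵢ[𝕜] EuclideanSpace 𝕜 n) :
    ∃ U ∈ unitaryGroup n 𝕜, ∀ x, U *ᵥ x = ofLp (e (toLp 2 x)) := by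
  let b := (EuclideanSpace.basisFun n 𝕜).toBasis
  refine ⟨LinearMap.toMatrix b b e, e.toMatrix_mem_unitaryGroup _ _, fun x => ?_⟩
  have hU : toEuclideanLin (LinearMap.toMatrix b b e) = e := by
    rw [toEuclideanLin_eq_toLin_orthonormal, toLin_toMatrix]
  exact congrArg ofLp (LinearMap.congr_fun hU (toLp 2 x))

end

lemma tensorVec_dotProduct_star_tensorVec {NA NB : ℕ} (x x' : Fin NA → ℂ)
    (y y' : Fin NB → ℂ) :
    tensorVec x' y' ⬝ᵥ star (tensorVec x y) = (x' ⬝ᵥ star x) * (y' ⬝ᵥ star y) := by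
  simp only [dotProduct, tensorVec, Pi.star_apply, star_mul', Fintype.sum_prod_type,
    Finset.sum_mul_sum]
  refine Finset.sum_congr rfl fun a _ => Finset.sum_congr rfl fun b _ => ?_
  ring

noncomputable def tensorVecₗᵢ {NA NB : ℕ} (x : Fin NA → ℂ) (hx : star x ⬝ᵥ x = 1) :
    EuclideanSpace ℂ (Fin NB) →ₗᵢ[ℂ] EuclideanSpace ℂ (Fin NA × Fin NB) :=
  LinearMap.isometryOfInner
    { toFun := fun y => toLp 2 (tensorVec x (ofLp y))
      map_add' := fun y y' => by ext; simp only [tensorVec, PiLp.add_apply, mul_add]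
      map_smul' := fun c y => by
        ext
        simp only [tensorVec, PiLp.smul_apply, smul_eq_mul, RingHom.id_apply]
        ring }
    fun y y' => by
      simp only [LinearMap.coe_mk, AddHom.coe_mk, EuclideanSpace.inner_toLp_toLp,
        tensorVec_dotProduct_star_tensorVec, dotProduct_comm x, hx, one_mul]
      rfl

theorem perfect_autoencoder_of_span_le_latent_dim_general
    (NA NB Q : ℕ)
    (Ψref : Fin NA → ℂ) (href : star Ψref ⬝ᵥ Ψref = 1)
    (ψ : Fin Q → (Fin NA × Fin NB → ℂ))
    (hψ : ∀ i, star (ψ i) ⬝ᵥ ψ i = 1)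
    (hspan : Module.finrank ℂ (Submodule.span ℂ (Set.range ψ)) ≤ NB) :
    ∃ U : Matrix (Fin NA × Fin NB) (Fin NA × Fin NB) ℂ,
      U * Uᴴ = 1 ∧ Uᴴ * U = 1 ∧
      ∀ i, ∃ φ : Fin NB → ℂ, star φ ⬝ᵥ φ = 1 ∧ U *ᵥ ψ i = tensorVec Ψref φ := by
  let V := Submodule.span ℂ (Set.range fun i => toLp 2 (ψ i))
  have hV : finrank ℂ V ≤ Fintype.card (Fin NB) := by
    rwa [Fintype.card_fin, finrank_span_range_toLp]
  obtain ⟨L⟩ := (EuclideanSpace.basisFun (Fin NB) ℂ).orthonormal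
    |>.nonempty_linearIsometry_of_finrank_le (E := V) hV
  obtain ⟨U, hU, hUψ⟩ := exists_mem_unitaryGroup_mulVec_eq
    ((((tensorVecₗᵢ Ψref href).comp L).extend).toLinearIsometryEquiv rfl)
  refine ⟨U, mem_unitaryGroup_iff.mp hU, mem_unitaryGroup_iff'.mp hU, fun i => ?_⟩
  have hψV : toLp 2 (ψ i) ∈ V := Submodule.subset_span ⟨i, rfl⟩
  refine ⟨ofLp (L ⟨_, hψV⟩), ?_, ?_⟩
  · rw [star_dotProduct_self_eq_inner, toLp_ofLp, L.inner_map_map, Submodule.coe_inner,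
      ← star_dotProduct_self_eq_inner, hψ]
  · rw [hUψ]
    exact congrArg ofLp (LinearIsometry.extend_apply _ ⟨_, hψV⟩)

/-- If the complex linear span of the unit vectors `ψ_1, …, ψ_Q` has
dimension at most `N_B`, then there exist a unitary `U` and unit vectors `φ_i ∈ ℂ^{N_B}` such
that `U ψ_i = Ψ_ref ⊗ φ_i` for every `i`; i.e. a perfect quantum autoencoder is achievable. -/
theorem perfect_autoencoder_of_span_le_latent_dim
    (NA NB Q : ℕ) (hNA : 1 ≤ NA) (hNB : 1 ≤ NB)
    (Ψref : Fin NA → ℂ) (href : star Ψref ⬝ᵥ Ψref = 1)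
    (ψ : Fin Q → (Fin NA × Fin NB → ℂ))
    (hψ : ∀ i, star (ψ i) ⬝ᵥ ψ i = 1)
    (hspan : Module.finrank ℂ (Submodule.span ℂ (Set.range ψ)) ≤ NB) :
    ∃ U : Matrix (Fin NA × Fin NB) (Fin NA × Fin NB) ℂ,
      U * Uᴴ = 1 ∧ Uᴴ * U = 1 ∧
      ∀ i, ∃ φ : Fin NB → ℂ, star φ ⬝ᵥ φ = 1 ∧ U *ᵥ ψ i = tensorVec Ψref φ :=
  perfect_autoencoder_of_span_le_latent_dim_general NA NB Q Ψref href ψ hψ hspan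
end

section
/- Let N_A, N_B ≥ 1, let ψ_0 ∈ ℂ^{Fin N_A × Fin N_B} be a unit vector, let Ψ_ref ∈ ℂ^{N_A} be a unit vector, and let U be a unitary matrix indexed by Fin N_A × Fin N_B. Set ρ_0 = ψ_0 ψ_0†, ρ_ref = Ψ_ref Ψ_ref†, ρ_A = Tr_B(U ρ_0 U†), ρ_B = Tr_A(U ρ_0 U†), J_1 = Re⟨ψ_0, U† (ρ_ref ⊗ ρ_B) U ψ_0⟩ (where ⊗ is the Kronecker product of matrices, indexed compatibly by Fin N_A × Fin N_B), and J_2 = Re⟨Ψ_ref, ρ_A Ψ_ref⟩. Then J_1 = 1 and J_2 = 1 hold if and only if there exist a unit vector ψ_B ∈ ℂ^{N_B} and a complex number c with |c| = 1 such that U ψ_0 = c · (Ψ_ref ⊗ ψ_B). -/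
open Matrix
open scoped Kronecker

/-- The partial trace over the first tensor factor `A`:
`(Tr_A M)_{b,b'} = ∑_a M_{(a,b),(a,b')}`. -/
noncomputable def traceA {NA NB : ℕ} (M : Matrix (Fin NA × Fin NB) (Fin NA × Fin NB) ℂ) :
    Matrix (Fin NB) (Fin NB) ℂ :=
  fun b b' => ∑ a : Fin NA, M (a, b) (a, b')

/-!
Write `φ = U ψ₀`, a unit vector, and `v = ⟨Ψ_ref|_A φ` for the partial inner product over `A`.
Then `J₂ = ‖v‖²`, and since `Ψ_ref ⊗ v` is the orthogonal projection of `φ` onto `Ψ_ref ⊗ ℂ^{N_B}`,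
`‖φ - Ψ_ref ⊗ v‖² = ‖φ‖² - ‖v‖²`; so `J₂ = 1` alone forces `φ = Ψ_ref ⊗ v`. Conversely, if
`φ = Ψ_ref ⊗ y` then `Tr_A(φφ†) = yy†`, hence `ρ_ref ⊗ ρ_B = φφ†`, `J₁ = |⟨φ, φ⟩|² = 1` and
`J₂ = ‖y‖² = 1`.
-/

open scoped ComplexOrder

section Generic

variable {m n : Type*} [Fintype n]

lemma re_star_dotProduct_self_eq_one_iff (v : n → ℂ) :
    (star v ⬝ᵥ v).re = 1 ↔ star v ⬝ᵥ v = 1 := by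
  have him : (star v ⬝ᵥ v).im = 0 :=
    (Complex.nonneg_iff.mp (dotProduct_star_self_nonneg v)).2.symm
  exact ⟨fun hre => Complex.ext hre him, fun h => by rw [h, Complex.one_re]⟩

lemma mul_vecMulVec_star_mul_conjTranspose (U : Matrix m n ℂ) (x : n → ℂ) :
    U * vecMulVec x (star x) * Uᴴ = vecMulVec (U *ᵥ x) (star (U *ᵥ x)) := by
  rw [mul_vecMulVec, vecMulVec_mul, star_mulVec]

lemma star_dotProduct_conjTranspose_mul_mul_mulVec [Fintype m] (U : Matrix m n ℂ)
    (M : Matrix m m ℂ) (x : n → ℂ) :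
    star x ⬝ᵥ (Uᴴ * M * U) *ᵥ x = star (U *ᵥ x) ⬝ᵥ M *ᵥ U *ᵥ x := by
  rw [← mulVec_mulVec, ← mulVec_mulVec, dotProduct_mulVec, star_mulVec]

lemma star_mulVec_dotProduct_mulVec_of_conjTranspose_mul_self [Fintype m] [DecidableEq n]
    {U : Matrix m n ℂ} (hU : Uᴴ * U = 1) (x : n → ℂ) :
    star (U *ᵥ x) ⬝ᵥ U *ᵥ x = star x ⬝ᵥ x := by
  rw [star_mulVec, ← dotProduct_mulVec, mulVec_mulVec, hU, one_mulVec]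

lemma star_dotProduct_vecMulVec_star_mulVec (w x : n → ℂ) :
    star x ⬝ᵥ vecMulVec w (star w) *ᵥ x = (star x ⬝ᵥ w) * (star w ⬝ᵥ x) := by
  rw [vecMulVec_mulVec, op_smul_eq_smul, dotProduct_smul, smul_eq_mul, mul_comm]

end Generic

section Bipartite

variable {NA NB : ℕ}

def partialInner (x : Fin NA → ℂ) (φ : Fin NA × Fin NB → ℂ) : Fin NB → ℂ :=
  fun b => ∑ a, star (x a) * φ (a, b)

lemma tensorVec_smul_right (x : Fin NA → ℂ) (c : ℂ) (y : Fin NB → ℂ) :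
    tensorVec x (c • y) = c • tensorVec x y := by
  ext p
  simp only [tensorVec, Pi.smul_apply, smul_eq_mul]
  ring

lemma star_tensorVec_dotProduct (x : Fin NA → ℂ) (y : Fin NB → ℂ) (φ : Fin NA × Fin NB → ℂ) :
    star (tensorVec x y) ⬝ᵥ φ = star y ⬝ᵥ partialInner x φ := by
  simp only [dotProduct, tensorVec, partialInner, Pi.star_apply, star_mul', Fintype.sum_prod_type,
    Finset.mul_sum]
  rw [Finset.sum_comm]
  exact Finset.sum_congr rfl fun b _ => Finset.sum_congr rfl fun a _ => by ring

lemma partialInner_tensorVec (x x' : Fin NA → ℂ) (y : Fin NB → ℂ) :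
    partialInner x (tensorVec x' y) = (star x ⬝ᵥ x') • y := by
  ext b
  simp only [partialInner, tensorVec, dotProduct, Pi.smul_apply, smul_eq_mul, Pi.star_apply,
    Finset.sum_mul, mul_assoc]

lemma star_tensorVec_dotProduct_tensorVec (x : Fin NA → ℂ) (y : Fin NB → ℂ) :
    star (tensorVec x y) ⬝ᵥ tensorVec x y = (star x ⬝ᵥ x) * (star y ⬝ᵥ y) := by
  rw [star_tensorVec_dotProduct, partialInner_tensorVec, dotProduct_smul, smul_eq_mul]

lemma star_dotProduct_traceB_mulVec (φ : Fin NA × Fin NB → ℂ) (x : Fin NA → ℂ) :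
    star x ⬝ᵥ traceB (vecMulVec φ (star φ)) *ᵥ x =
      star (partialInner x φ) ⬝ᵥ partialInner x φ := by
  simp only [dotProduct, mulVec, traceB, partialInner, vecMulVec_apply, Pi.star_apply, star_sum,
    star_mul', star_star, Finset.mul_sum, Finset.sum_mul]
  calc _ = ∑ a, ∑ b, ∑ a', star (x a) * (φ (a, b) * star (φ (a', b)) * x a') :=
        Finset.sum_congr rfl fun a _ => Finset.sum_comm
    _ = _ := by
      rw [Finset.sum_comm]
      exact Finset.sum_congr rfl fun b _ => Finset.sum_congr rfl fun a _ =>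
        Finset.sum_congr rfl fun a' _ => by ring

lemma traceA_vecMulVec_tensorVec (x : Fin NA → ℂ) (y : Fin NB → ℂ) :
    traceA (vecMulVec (tensorVec x y) (star (tensorVec x y))) =
      (star x ⬝ᵥ x) • vecMulVec y (star y) := by
  ext b b'
  simp only [traceA, vecMulVec_apply, tensorVec, Pi.star_apply, star_mul', dotProduct,
    Matrix.smul_apply, smul_eq_mul, Finset.sum_mul]
  exact Finset.sum_congr rfl fun a _ => by ring

lemma vecMulVec_kronecker_vecMulVec (x : Fin NA → ℂ) (y : Fin NB → ℂ) :
    vecMulVec x (star x) ⊗ₖ vecMulVec y (star y) =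
      vecMulVec (tensorVec x y) (star (tensorVec x y)) := by
  ext p q
  simp only [kroneckerMap_apply, vecMulVec_apply, Pi.star_apply, tensorVec, star_mul']
  ring

lemma star_dotProduct_sub_tensorVec_partialInner {x : Fin NA → ℂ} (hx : star x ⬝ᵥ x = 1)
    (φ : Fin NA × Fin NB → ℂ) :
    star (φ - tensorVec x (partialInner x φ)) ⬝ᵥ (φ - tensorVec x (partialInner x φ)) =
      star φ ⬝ᵥ φ - star (partialInner x φ) ⬝ᵥ partialInner x φ := by
  set v := partialInner x φ
  have hvφ : star (tensorVec x v) ⬝ᵥ φ = star v ⬝ᵥ v := star_tensorVec_dotProduct x v φ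
  have hφv : star φ ⬝ᵥ tensorVec x v = star v ⬝ᵥ v := by
    rw [star_dotProduct, hvφ, ← star_dotProduct]
  have hvv : star (tensorVec x v) ⬝ᵥ tensorVec x v = star v ⬝ᵥ v := by
    rw [star_tensorVec_dotProduct_tensorVec, hx, one_mul]
  rw [star_sub, sub_dotProduct, dotProduct_sub, dotProduct_sub, hvφ, hφv, hvv]
  ring

end Bipartite

theorem perfect_fidelity_iff_disentangles_general
    (NA NB : ℕ)
    (ψ0 : Fin NA × Fin NB → ℂ) (hψ0 : star ψ0 ⬝ᵥ ψ0 = 1)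
    (Ψref : Fin NA → ℂ) (href : star Ψref ⬝ᵥ Ψref = 1)
    (U : Matrix (Fin NA × Fin NB) (Fin NA × Fin NB) ℂ)
    (hU2 : Uᴴ * U = 1) :
    ((star ψ0 ⬝ᵥ
        (Uᴴ * (vecMulVec Ψref (star Ψref) ⊗ₖ
                traceA (U * vecMulVec ψ0 (star ψ0) * Uᴴ)) * U) *ᵥ ψ0).re = 1 ∧
     (star Ψref ⬝ᵥ (traceB (U * vecMulVec ψ0 (star ψ0) * Uᴴ)) *ᵥ Ψref).re = 1)
    ↔ ∃ (ψB : Fin NB → ℂ) (c : ℂ), star ψB ⬝ᵥ ψB = 1 ∧ ‖c‖ = 1 ∧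
        U *ᵥ ψ0 = c • tensorVec Ψref ψB := by
  have hφ : star (U *ᵥ ψ0) ⬝ᵥ U *ᵥ ψ0 = 1 := by
    rw [star_mulVec_dotProduct_mulVec_of_conjTranspose_mul_self hU2, hψ0]
  rw [star_dotProduct_conjTranspose_mul_mul_mulVec, mul_vecMulVec_star_mul_conjTranspose,
    star_dotProduct_traceB_mulVec, re_star_dotProduct_self_eq_one_iff]
  generalize U *ᵥ ψ0 = φ at hφ ⊢
  constructor
  · rintro ⟨-, hv⟩
    refine ⟨partialInner Ψref φ, 1, hv, norm_one, ?_⟩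
    rw [one_smul, ← sub_eq_zero, ← dotProduct_star_self_eq_zero,
      star_dotProduct_sub_tensorVec_partialInner href, hφ, hv, sub_self]
  · rintro ⟨ψB, c, -, -, rfl⟩
    rw [← tensorVec_smul_right] at hφ ⊢
    have hy : star (c • ψB) ⬝ᵥ c • ψB = 1 := by
      rwa [star_tensorVec_dotProduct_tensorVec, href, one_mul] at hφ
    refine ⟨?_, by rwa [partialInner_tensorVec, href, one_smul]⟩
    rw [traceA_vecMulVec_tensorVec, href, one_smul, vecMulVec_kronecker_vecMulVec,
      star_dotProduct_vecMulVec_star_mulVec, hφ, one_mul, Complex.one_re]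

/-- With `ρ_0 = ψ_0 ψ_0†`, `ρ_ref = Ψ_ref Ψ_ref†`,
`ρ_A = Tr_B (U ρ_0 U†)`, `ρ_B = Tr_A (U ρ_0 U†)`,
`J_1 = Re⟨ψ_0, U† (ρ_ref ⊗ ρ_B) U ψ_0⟩` and `J_2 = Re⟨Ψ_ref, ρ_A Ψ_ref⟩`, one has
`J_1 = 1 ∧ J_2 = 1` iff `U ψ_0 = c • (Ψ_ref ⊗ ψ_B)` for some unit vector `ψ_B` and some
`c : ℂ` with `|c| = 1` (i.e. `U` disentangles `ψ_0` with trash state `Ψ_ref`). -/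
theorem perfect_fidelity_iff_disentangles
    (NA NB : ℕ) (hNA : 1 ≤ NA) (hNB : 1 ≤ NB)
    (ψ0 : Fin NA × Fin NB → ℂ) (hψ0 : star ψ0 ⬝ᵥ ψ0 = 1)
    (Ψref : Fin NA → ℂ) (href : star Ψref ⬝ᵥ Ψref = 1)
    (U : Matrix (Fin NA × Fin NB) (Fin NA × Fin NB) ℂ)
    (hU1 : U * Uᴴ = 1) (hU2 : Uᴴ * U = 1) :
    ((star ψ0 ⬝ᵥ
        (Uᴴ * (vecMulVec Ψref (star Ψref) ⊗ₖ
                traceA (U * vecMulVec ψ0 (star ψ0) * Uᴴ)) * U) *ᵥ ψ0).re = 1 ∧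
     (star Ψref ⬝ᵥ (traceB (U * vecMulVec ψ0 (star ψ0) * Uᴴ)) *ᵥ Ψref).re = 1)
    ↔ ∃ (ψB : Fin NB → ℂ) (c : ℂ), star ψB ⬝ᵥ ψB = 1 ∧ ‖c‖ = 1 ∧
        U *ᵥ ψ0 = c • tensorVec Ψref ψB :=
  perfect_fidelity_iff_disentangles_general NA NB ψ0 hψ0 Ψref href U hU2
end

section
/- Let N_A, N_B ≥ 1, let ψ_1, …, ψ_Q ∈ ℂ^{Fin N_A × Fin N_B} be an orthonormal family of vectors (so Q ≤ N_A·N_B), let ρ = (1/Q) ∑_{i=1}^{Q} ψ_i ψ_i†, and let Ψ_ref ∈ ℂ^{N_A} be a unit vector. Then the greatest value of Re⟨Ψ_ref, Tr_B(U ρ U†) Ψ_ref⟩ over unitary matrices U indexed by Fin N_A × Fin N_B equals N_B/Q if Q ≥ N_B, and equals 1 if Q ≤ N_B. -/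
open Matrix

/-! Write `χ_b = Ψ_ref ⊗ e_b`. Then `Re⟨Ψ_ref, Tr_B(U ρ U†) Ψ_ref⟩ = (1/Q) ∑_{b,i} |⟨Uψ_i, χ_b⟩|²`,
and both `(Uψ_i)_i` and `(χ_b)_b` are orthonormal families. Bessel's inequality for each `χ_b`,
resp. each `Uψ_i`, bounds the double sum by `N_B`, resp. `Q`. The bound `min(N_B, Q)` is attained by
a unitary sending `min(N_B, Q)` of the `ψ_i` onto as many of the `χ_b`. -/

theorem normSq_star_dotProduct_comm {n : Type*} [Fintype n] (x y : n → ℂ) :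
    Complex.normSq (star x ⬝ᵥ y) = Complex.normSq (star y ⬝ᵥ x) := by
  rw [star_dotProduct]
  exact Complex.normSq_conj _

section Orthonormal

variable {n ι κ : Type*} [Fintype n] [DecidableEq ι]

def IsOrthonormal (v : ι → n → ℂ) : Prop :=
  ∀ i j, star (v i) ⬝ᵥ v j = if i = j then 1 else 0

theorem isOrthonormal_iff_orthonormal {v : ι → n → ℂ} :
    IsOrthonormal v ↔ Orthonormal ℂ (fun i => WithLp.toLp 2 (v i)) := by
  simp only [orthonormal_iff_ite, EuclideanSpace.inner_toLp_toLp, dotProduct_comm, IsOrthonormal]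

namespace IsOrthonormal

variable {v : ι → n → ℂ}

theorem comp [DecidableEq κ] (hv : IsOrthonormal v) (f : κ ↪ ι) : IsOrthonormal (v ∘ f) :=
  fun i j => by simp [hv (f i) (f j)]

theorem mulVec [DecidableEq n] (hv : IsOrthonormal v) {U : Matrix n n ℂ} (hU : Uᴴ * U = 1) :
    IsOrthonormal fun i => U *ᵥ v i := fun i j => by
  rw [star_mulVec, ← dotProduct_mulVec, mulVec_mulVec, hU, one_mulVec, hv]

theorem card_le [Fintype ι] (hv : IsOrthonormal v) : Fintype.card ι ≤ Fintype.card n := by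
  simpa using (isOrthonormal_iff_orthonormal.mp hv).linearIndependent.fintype_card_le_finrank

theorem sum_normSq_le [Fintype ι] (hv : IsOrthonormal v) {x : n → ℂ} (hx : star x ⬝ᵥ x = 1) :
    ∑ i, Complex.normSq (star (v i) ⬝ᵥ x) ≤ 1 := by
  have hx' : ‖WithLp.toLp 2 x‖ ^ 2 = 1 := by
    rw [← inner_self_eq_norm_sq (𝕜 := ℂ), EuclideanSpace.inner_toLp_toLp, dotProduct_comm, hx]
    simp
  simpa [← hx', ← Complex.sq_norm, EuclideanSpace.inner_toLp_toLp, dotProduct_comm] using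
    (isOrthonormal_iff_orthonormal.mp hv).sum_inner_products_le (s := Finset.univ)
      (x := WithLp.toLp 2 x)

theorem sum_normSq_star_dotProduct_left [Fintype ι] (hv : IsOrthonormal v) (j : ι) :
    ∑ i, Complex.normSq (star (v i) ⬝ᵥ v j) = 1 := by
  simp [hv _ j, apply_ite Complex.normSq]

theorem sum_normSq_star_dotProduct_right [Fintype ι] (hv : IsOrthonormal v) (i : ι) :
    ∑ j, Complex.normSq (star (v i) ⬝ᵥ v j) = 1 := by
  simp [hv i, apply_ite Complex.normSq]

variable [Fintype ι] [Fintype κ] [DecidableEq κ] {w : κ → n → ℂ}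

theorem sum_sum_normSq_le_card_right (hv : IsOrthonormal v) (hw : IsOrthonormal w) :
    ∑ k, ∑ i, Complex.normSq (star (v i) ⬝ᵥ w k) ≤ Fintype.card κ := by
  refine (Finset.sum_le_sum fun k _ => hv.sum_normSq_le (x := w k) ?_).trans_eq (by simp)
  simp [hw k k]

theorem sum_sum_normSq_le_card_left (hv : IsOrthonormal v) (hw : IsOrthonormal w) :
    ∑ k, ∑ i, Complex.normSq (star (v i) ⬝ᵥ w k) ≤ Fintype.card ι := by
  rw [Finset.sum_comm]
  refine (Finset.sum_le_sum (g := fun _ => 1) fun i _ => ?_).trans_eq (by simp)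
  simp_rw [normSq_star_dotProduct_comm (v _)]
  exact hw.sum_normSq_le (by simp [hv i i])

end IsOrthonormal

end Orthonormal

section Unitary

variable {n ι : Type*} [Fintype n] [DecidableEq n] [DecidableEq ι]

theorem IsOrthonormal.exists_unitary_mulVec_single {v : ι → n → ℂ} (hv : IsOrthonormal v)
    (e : ι ↪ n) : ∃ U ∈ unitaryGroup n ℂ, ∀ i, U *ᵥ Pi.single (e i) 1 = v i := by
  let u : n → EuclideanSpace ℂ n := Function.extend e (fun i => WithLp.toLp 2 (v i)) 0
  have hu : ∀ i, u (e i) = WithLp.toLp 2 (v i) := e.injective.extend_apply _ _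
  have hu_orth : Orthonormal ℂ ((Set.range e).domRestrict u) := by
    have : (Set.range e).domRestrict u =
        (fun i => WithLp.toLp 2 (v i)) ∘ (Equiv.ofInjective e e.injective).symm := by
      funext ⟨_, i, rfl⟩
      simp [hu]
    exact this ▸ (isOrthonormal_iff_orthonormal.mp hv).comp _ (Equiv.injective _)
  obtain ⟨b, hb⟩ := hu_orth.exists_orthonormalBasis_extension_of_card_eq (by simp)
  refine ⟨(EuclideanSpace.basisFun n ℂ).toBasis.toMatrix b,
    (EuclideanSpace.basisFun n ℂ).toMatrix_orthonormalBasis_mem_unitary b, fun i => ?_⟩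
  ext p
  simp [Module.Basis.toMatrix_apply, hb (e i) (Set.mem_range_self i), hu]

theorem IsOrthonormal.exists_unitary_mulVec_eq [Fintype ι] {v w : ι → n → ℂ}
    (hv : IsOrthonormal v) (hw : IsOrthonormal w) :
    ∃ U ∈ unitaryGroup n ℂ, ∀ i, U *ᵥ v i = w i := by
  obtain ⟨e⟩ := Function.Embedding.nonempty_of_card_le hv.card_le
  obtain ⟨V, hV, hVv⟩ := hv.exists_unitary_mulVec_single e
  obtain ⟨W, hW, hWw⟩ := hw.exists_unitary_mulVec_single e
  refine ⟨W * star V, Submonoid.mul_mem _ hW (Unitary.star_mem hV), fun i => ?_⟩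
  rw [← hVv, ← hWw, mulVec_mulVec, Matrix.mul_assoc, mem_unitaryGroup_iff'.mp hV, Matrix.mul_one]

end Unitary

section PartialTrace

variable {n ι : Type*} [Fintype n] [Fintype ι]

theorem star_dotProduct_sum_vecMulVec_mulVec (v : ι → n → ℂ) (x : n → ℂ) :
    star x ⬝ᵥ (∑ i, vecMulVec (v i) (star (v i))) *ᵥ x =
      ∑ i, (Complex.normSq (star (v i) ⬝ᵥ x) : ℂ) := by
  simp only [Matrix.sum_mulVec, dotProduct_sum, vecMulVec_mulVec]
  refine Finset.sum_congr rfl fun i _ => ?_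
  rw [dotProduct_smul, op_smul_eq_mul, star_dotProduct x, ← Complex.mul_conj, mul_comm]
  rfl

theorem mul_sum_vecMulVec_mul_conjTranspose (U : Matrix n n ℂ) (v : ι → n → ℂ) :
    U * (∑ i, vecMulVec (v i) (star (v i))) * Uᴴ =
      ∑ i, vecMulVec (U *ᵥ v i) (star (U *ᵥ v i)) := by
  simp [Matrix.mul_sum, Matrix.sum_mul, mul_vecMulVec, vecMulVec_mul, star_mulVec]

def tensorSingle {α β : Type*} [DecidableEq β] (Ψ : α → ℂ) (b : β) : α × β → ℂ :=
  fun p => if p.2 = b then Ψ p.1 else 0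

theorem isOrthonormal_tensorSingle {α β : Type*} [Fintype α] [Fintype β] [DecidableEq β]
    {Ψ : α → ℂ} (hΨ : star Ψ ⬝ᵥ Ψ = 1) : IsOrthonormal (tensorSingle (β := β) Ψ) := by
  intro b b'
  rcases eq_or_ne b b' with rfl | h
  · simp [← hΨ, tensorSingle, dotProduct, Fintype.sum_prod_type, apply_ite star]
  · simp [h, h.symm, tensorSingle, dotProduct, Fintype.sum_prod_type, apply_ite star]

variable {NA NB : ℕ}

theorem star_dotProduct_traceB_mulVec_s11 (Ψ : Fin NA → ℂ)
    (M : Matrix (Fin NA × Fin NB) (Fin NA × Fin NB) ℂ) :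
    star Ψ ⬝ᵥ traceB M *ᵥ Ψ = ∑ b, star (tensorSingle Ψ b) ⬝ᵥ M *ᵥ tensorSingle Ψ b := by
  simp only [dotProduct, mulVec, traceB, tensorSingle, Pi.star_apply, Fintype.sum_prod_type,
    apply_ite star, star_zero, ite_mul, zero_mul, mul_ite, mul_zero, Finset.sum_ite_eq',
    Finset.mem_univ, if_true, Finset.mul_sum, Finset.sum_mul, Finset.sum_ite_irrel,
    Finset.sum_const_zero]
  exact Eq.trans (Finset.sum_congr rfl fun a _ => Finset.sum_comm) Finset.sum_comm

theorem re_star_dotProduct_traceB_conj_mulVec (Ψ : Fin NA → ℂ) (Q : ℕ)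
    (ψ : ι → Fin NA × Fin NB → ℂ) (U : Matrix (Fin NA × Fin NB) (Fin NA × Fin NB) ℂ) :
    (star Ψ ⬝ᵥ traceB (U * ((1 / (Q : ℂ)) • ∑ i, vecMulVec (ψ i) (star (ψ i))) * Uᴴ) *ᵥ Ψ).re =
      (∑ b, ∑ i, Complex.normSq (star (U *ᵥ ψ i) ⬝ᵥ tensorSingle Ψ b)) / Q := by
  rw [Matrix.mul_smul, Matrix.smul_mul, mul_sum_vecMulVec_mul_conjTranspose,
    star_dotProduct_traceB_mulVec_s11]
  simp only [smul_mulVec, dotProduct_smul, star_dotProduct_sum_vecMulVec_mulVec, smul_eq_mul,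
    ← Finset.mul_sum]
  norm_cast
  rw [one_div_mul_eq_div, Complex.div_natCast_re, Complex.ofReal_re]

end PartialTrace

theorem max_compression_rate_orthonormal_inputs_general
    (NA NB Q : ℕ) (hQ : 1 ≤ Q)
    (ψ : Fin Q → (Fin NA × Fin NB → ℂ))
    (horth : ∀ i j, star (ψ i) ⬝ᵥ ψ j = if i = j then 1 else 0)
    (Ψref : Fin NA → ℂ) (href : star Ψref ⬝ᵥ Ψref = 1)
    (ρ : Matrix (Fin NA × Fin NB) (Fin NA × Fin NB) ℂ)
    (hρ : ρ = (1 / (Q : ℂ)) • ∑ i, vecMulVec (ψ i) (star (ψ i))) :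
    (NB ≤ Q →
      IsGreatest
        { x : ℝ | ∃ U : Matrix (Fin NA × Fin NB) (Fin NA × Fin NB) ℂ,
            U * Uᴴ = 1 ∧ Uᴴ * U = 1 ∧
            x = (star Ψref ⬝ᵥ (traceB (U * ρ * Uᴴ)) *ᵥ Ψref).re }
        ((NB : ℝ) / Q)) ∧
    (Q ≤ NB →
      IsGreatest
        { x : ℝ | ∃ U : Matrix (Fin NA × Fin NB) (Fin NA × Fin NB) ℂ,
            U * Uᴴ = 1 ∧ Uᴴ * U = 1 ∧
            x = (star Ψref ⬝ᵥ (traceB (U * ρ * Uᴴ)) *ᵥ Ψref).re }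
        1) := by
  have hψ : IsOrthonormal ψ := horth
  have hχ : IsOrthonormal (tensorSingle (β := Fin NB) Ψref) := isOrthonormal_tensorSingle href
  have hQ₀ : (0 : ℝ) < Q := by exact_mod_cast hQ
  simp only [hρ, re_star_dotProduct_traceB_conj_mulVec]
  refine ⟨fun h => ⟨?_, ?_⟩, fun h => ⟨?_, ?_⟩⟩
  · obtain ⟨U, hU, hUψ⟩ := (hψ.comp (Fin.castLEEmb h)).exists_unitary_mulVec_eq hχ
    refine ⟨U, (Unitary.mem_iff.mp hU).2, (Unitary.mem_iff.mp hU).1, ?_⟩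
    simp only [← hUψ, Function.comp_apply,
      (hψ.mulVec (Unitary.mem_iff.mp hU).1).sum_normSq_star_dotProduct_left]
    simp
  · rintro x ⟨U, -, hU, rfl⟩
    rw [div_le_div_iff_of_pos_right hQ₀]
    simpa using (hψ.mulVec hU).sum_sum_normSq_le_card_right hχ
  · obtain ⟨U, hU, hUψ⟩ := hψ.exists_unitary_mulVec_eq (hχ.comp (Fin.castLEEmb h))
    refine ⟨U, (Unitary.mem_iff.mp hU).2, (Unitary.mem_iff.mp hU).1, ?_⟩
    simp only [hUψ, Function.comp_apply]
    rw [Finset.sum_comm]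
    simp only [hχ.sum_normSq_star_dotProduct_right]
    simp [hQ₀.ne']
  · rintro x ⟨U, -, hU, rfl⟩
    rw [div_le_one hQ₀]
    simpa using (hψ.mulVec hU).sum_sum_normSq_le_card_left hχ

/-- For an orthonormal family `ψ_1, …, ψ_Q` in `ℂ^{N_A} ⊗ ℂ^{N_B}`, the
mixed state `ρ = (1/Q) ∑_i ψ_i ψ_i†`, and a unit vector `Ψ_ref ∈ ℂ^{N_A}`, the greatest value
of `Re⟨Ψ_ref, Tr_B (U ρ U†) Ψ_ref⟩` over unitaries `U` equals `N_B / Q` if `Q ≥ N_B`, and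
equals `1` if `Q ≤ N_B`. -/
theorem max_compression_rate_orthonormal_inputs
    (NA NB Q : ℕ) (hNA : 1 ≤ NA) (hNB : 1 ≤ NB) (hQ : 1 ≤ Q)
    (ψ : Fin Q → (Fin NA × Fin NB → ℂ))
    (horth : ∀ i j, star (ψ i) ⬝ᵥ ψ j = if i = j then 1 else 0)
    (Ψref : Fin NA → ℂ) (href : star Ψref ⬝ᵥ Ψref = 1)
    (ρ : Matrix (Fin NA × Fin NB) (Fin NA × Fin NB) ℂ)
    (hρ : ρ = (1 / (Q : ℂ)) • ∑ i, vecMulVec (ψ i) (star (ψ i))) :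
    (NB ≤ Q →
      IsGreatest
        { x : ℝ | ∃ U : Matrix (Fin NA × Fin NB) (Fin NA × Fin NB) ℂ,
            U * Uᴴ = 1 ∧ Uᴴ * U = 1 ∧
            x = (star Ψref ⬝ᵥ (traceB (U * ρ * Uᴴ)) *ᵥ Ψref).re }
        ((NB : ℝ) / Q)) ∧
    (Q ≤ NB →
      IsGreatest
        { x : ℝ | ∃ U : Matrix (Fin NA × Fin NB) (Fin NA × Fin NB) ℂ,
            U * Uᴴ = 1 ∧ Uᴴ * U = 1 ∧
            x = (star Ψref ⬝ᵥ (traceB (U * ρ * Uᴴ)) *ᵥ Ψref).re }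
        1) :=
  max_compression_rate_orthonormal_inputs_general NA NB Q hQ ψ horth Ψref href ρ hρ
end

section
/- Let A and B be n×n complex positive semidefinite matrices and let C be an m×m complex positive semidefinite matrix. Then √(√(A ⊗ C) · (B ⊗ C) · √(A ⊗ C)) = √(√A · B · √A) ⊗ C, where ⊗ denotes the Kronecker product of matrices and √ denotes the positive semidefinite square root. -/
/-! Since `√(A ⊗ C) = √A ⊗ √C`, the matrix under the outer root is `(√A B √A) ⊗ C²`, and
`√(√A B √A) ⊗ C` is a positive semidefinite square root of it; conclude by uniqueness of
positive semidefinite square roots. -/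

open Matrix
open scoped Kronecker
open scoped ComplexOrder

namespace Matrix.PosSemidef

variable {n 𝕜 : Type*} [Fintype n] [RCLike 𝕜] [DecidableEq n] {A : Matrix n n 𝕜}
  (hA : PosSemidef A)

/-- The positive semidefinite square root (the definition removed from Mathlib). -/
noncomputable def sqrt : Matrix n n 𝕜 :=
  hA.1.eigenvectorUnitary.1 * diagonal ((↑) ∘ (√·) ∘ hA.1.eigenvalues) *
  (star hA.1.eigenvectorUnitary : Matrix n n 𝕜)

theorem posSemidef_sqrt : PosSemidef hA.sqrt := by
  unfold sqrt
  apply PosSemidef.mul_mul_conjTranspose_same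
  refine posSemidef_diagonal_iff.mpr fun i ↦ ?_
  rw [Function.comp_apply, RCLike.nonneg_iff]
  constructor
  · simp only [RCLike.ofReal_re]
    exact Real.sqrt_nonneg _
  · simp only [RCLike.ofReal_im]

theorem sqrt_mul_self : hA.sqrt * hA.sqrt = A := by
  let C : Matrix n n 𝕜 := hA.1.eigenvectorUnitary
  let E := diagonal ((↑) ∘ (√·) ∘ hA.1.eigenvalues : n → 𝕜)
  suffices C * (E * (star C * C) * E) * star C = A by
    change (C * E * star C) * (C * E * star C) = A
    simpa only [← mul_assoc] using this
  have : star C * C = 1 := Unitary.star_mul_self_of_mem hA.1.eigenvectorUnitary.2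
  rw [this, mul_one]
  have : E * E = diagonal ((↑) ∘ hA.1.eigenvalues) := by
    rw [diagonal_mul_diagonal]
    congr! with v
    simp [← pow_two, ← RCLike.ofReal_pow, Real.sq_sqrt (hA.eigenvalues_nonneg v)]
  rw [this]
  conv_rhs => rw [hA.1.spectral_theorem]
  simp [C, mul_assoc]

end Matrix.PosSemidef

/-- The conjugate transpose of a Kronecker product is the Kronecker product of the
conjugate transposes. -/
theorem kron_conjTranspose {n m : ℕ} (A : Matrix (Fin n) (Fin n) ℂ)
    (B : Matrix (Fin m) (Fin m) ℂ) : (A ⊗ₖ B)ᴴ = Aᴴ ⊗ₖ Bᴴ := by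
  ext ⟨i, j⟩ ⟨k, l⟩
  simp [Matrix.conjTranspose_apply, Matrix.kroneckerMap_apply]

/-- The Kronecker product of positive semidefinite matrices is positive semidefinite. -/
theorem kron_posSemidef {n m : ℕ} {A : Matrix (Fin n) (Fin n) ℂ}
    {B : Matrix (Fin m) (Fin m) ℂ} (hA : A.PosSemidef) (hB : B.PosSemidef) :
    (A ⊗ₖ B).PosSemidef := by
  have h : A ⊗ₖ B = (hA.sqrt ⊗ₖ hB.sqrt)ᴴ * (hA.sqrt ⊗ₖ hB.sqrt) := by
    rw [kron_conjTranspose, hA.posSemidef_sqrt.isHermitian.eq,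
      hB.posSemidef_sqrt.isHermitian.eq, ← Matrix.mul_kronecker_mul,
      hA.sqrt_mul_self, hB.sqrt_mul_self]
  rw [h]
  exact Matrix.posSemidef_conjTranspose_mul_self _

/-- Conjugating a positive semidefinite matrix by a Hermitian matrix yields a positive
semidefinite matrix; in particular `√A · B · √A` is positive semidefinite. -/
theorem sandwich_posSemidef {k : Type*} [Fintype k] {M S : Matrix k k ℂ}
    (hM : M.PosSemidef) (hS : S.IsHermitian) : (S * M * S).PosSemidef := by
  have h := hM.mul_mul_conjTranspose_same S
  rwa [hS.eq] at h

namespace Matrix.PosSemidef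

variable {n 𝕜 : Type*} [Fintype n] [DecidableEq n] [RCLike 𝕜]

open scoped MatrixOrder in
theorem eq_sqrt_of_mul_self_eq {S B : Matrix n n 𝕜} (hS : S.PosSemidef) (hB : B.PosSemidef)
    (h : S * S = B) : S = hB.sqrt :=
  (CFC.sqrt_unique h hS.nonneg).symm.trans
    (CFC.sqrt_unique hB.sqrt_mul_self hB.posSemidef_sqrt.nonneg)

theorem sqrt_mul_mul_sqrt {C : Matrix n n 𝕜} (hC : C.PosSemidef) :
    hC.sqrt * C * hC.sqrt = C * C :=
  calc hC.sqrt * C * hC.sqrt = hC.sqrt * (hC.sqrt * hC.sqrt) * hC.sqrt := by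
        rw [hC.sqrt_mul_self]
    _ = (hC.sqrt * hC.sqrt) * (hC.sqrt * hC.sqrt) := by simp only [mul_assoc]
    _ = C * C := by rw [hC.sqrt_mul_self]

end Matrix.PosSemidef

theorem sqrt_kron {n m : ℕ} {A : Matrix (Fin n) (Fin n) ℂ} {C : Matrix (Fin m) (Fin m) ℂ}
    (hA : A.PosSemidef) (hC : C.PosSemidef) :
    (kron_posSemidef hA hC).sqrt = hA.sqrt ⊗ₖ hC.sqrt :=
  ((kron_posSemidef hA.posSemidef_sqrt hC.posSemidef_sqrt).eq_sqrt_of_mul_self_eq _ <| by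
    rw [← mul_kronecker_mul, hA.sqrt_mul_self, hC.sqrt_mul_self]).symm

/-- For positive semidefinite `A`, `B` (size `n`) and `C` (size `m`),
`√(√(A⊗C) · (B⊗C) · √(A⊗C)) = √(√A · B · √A) ⊗ C`. -/
theorem sqrt_sandwich_kron_right_factor {n m : ℕ}
    (A B : Matrix (Fin n) (Fin n) ℂ) (C : Matrix (Fin m) (Fin m) ℂ)
    (hA : A.PosSemidef) (hB : B.PosSemidef) (hC : C.PosSemidef) :
    (sandwich_posSemidef (kron_posSemidef hB hC)
        (kron_posSemidef hA hC).posSemidef_sqrt.isHermitian).sqrt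
      = (sandwich_posSemidef hB hA.posSemidef_sqrt.isHermitian).sqrt ⊗ₖ C := by
  have hsandwich : (kron_posSemidef hA hC).sqrt * (B ⊗ₖ C) * (kron_posSemidef hA hC).sqrt
      = (hA.sqrt * B * hA.sqrt) ⊗ₖ (C * C) := by
    rw [sqrt_kron hA hC, ← mul_kronecker_mul, ← mul_kronecker_mul, hC.sqrt_mul_mul_sqrt]
  have hX := sandwich_posSemidef hB hA.posSemidef_sqrt.isHermitian
  refine ((kron_posSemidef hX.posSemidef_sqrt hC).eq_sqrt_of_mul_self_eq _ ?_).symm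
  rw [← mul_kronecker_mul, hX.sqrt_mul_self, hsandwich]
end
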